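/- arXiv:2404.18860 — 4 statements merged into one kernel-verified Lean document; each statement's English description precedes it below -/
import Mathlib

section
/- Let V be a d-dimensional vector space over F_q, V_n a subspace of dimension n, and T a linear automorphism with dim Fix(T) = d - n + 1. If dim(V_n + V_n·T) = 2n - 1 < d, then dim(V_n ∩ Fix(T)) = 1. -/
open Module

/-- If `dim Fix(T) = d - n + 1`, `dim V_n = n` and `dim (V_n + V_n·T) = 2n - 1 < d`,
then `dim (V_n ⊓ Fix(T)) = 1`. -/
theorem stmt1 {K V : Type*} [Field K] [Fintype K] [AddCommGroup V] [Module K V]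
    [FiniteDimensional K V] {d n : ℕ} (hd : finrank K V = d) (hn : n ≤ d)
    (Vn : Submodule K V) (hVn : finrank K Vn = n)
    (T : V ≃ₗ[K] V)
    (hT : finrank K (LinearMap.ker ((T : V →ₗ[K] V) - 1)) = d - n + 1)
    (hsum : finrank K ↥(Vn ⊔ Vn.map (T : V →ₗ[K] V)) = 2 * n - 1)
    (hlt : 2 * n - 1 < d) :
    finrank K ↥(Vn ⊓ LinearMap.ker ((T : V →ₗ[K] V) - 1)) = 1 := by
  set F := LinearMap.ker ((T : V →ₗ[K] V) - 1) with hF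
  have hFle : finrank K F ≤ d := hd ▸ Submodule.finrank_le F
  have hn1 : 1 ≤ n := by omega
  have hmap : finrank K (Vn.map (T : V →ₗ[K] V)) = n := by
    rw [LinearEquiv.finrank_map_eq]; exact hVn
  have h1 : Vn ⊓ F ≤ Vn ⊓ Vn.map (T : V →ₗ[K] V) := by
    rintro v hv
    rw [Submodule.mem_inf] at hv ⊢
    refine ⟨hv.1, ⟨v, hv.1, ?_⟩⟩
    have h0 : ((T : V →ₗ[K] V) - 1) v = 0 := hv.2
    rw [LinearMap.sub_apply, Module.End.one_apply, sub_eq_zero] at h0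
    exact h0
  have e1 := Submodule.finrank_sup_add_finrank_inf_eq Vn (Vn.map (T : V →ₗ[K] V))
  rw [hsum, hVn, hmap] at e1
  have hup : finrank K ↥(Vn ⊓ F) ≤ finrank K ↥(Vn ⊓ Vn.map (T : V →ₗ[K] V)) :=
    Submodule.finrank_mono h1
  have e2 := Submodule.finrank_sup_add_finrank_inf_eq Vn F
  rw [hVn, hT] at e2
  have hsle : finrank K ↥(Vn ⊔ F) ≤ d := hd ▸ Submodule.finrank_le _
  omega
end

section
/- Let V be a d-dimensional vector space over F_q, V_n a subspace of dimension n, and T a linear automorphism with dim Fix(T) = d - n + 1 such that dim(V_n + V_n·T) = 2n - 1 < d. Then the subspace V_{n'} := V_n + V_n·T is invariant under T. -/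
open Module

/-- Under the hypotheses of the GoingUp step, the subspace `V_{n'} = V_n + V_n·T`
is invariant under `T`. -/
theorem stmt2 {K V : Type*} [Field K] [Fintype K] [AddCommGroup V] [Module K V]
    [FiniteDimensional K V] {d n : ℕ} (hd : finrank K V = d) (hn : n ≤ d)
    (Vn : Submodule K V) (hVn : finrank K Vn = n)
    (T : V ≃ₗ[K] V)
    (hT : finrank K (LinearMap.ker ((T : V →ₗ[K] V) - 1)) = d - n + 1)
    (hsum : finrank K ↥(Vn ⊔ Vn.map (T : V →ₗ[K] V)) = 2 * n - 1)
    (hlt : 2 * n - 1 < d) :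
    (Vn ⊔ Vn.map (T : V →ₗ[K] V)).map (T : V →ₗ[K] V)
      = Vn ⊔ Vn.map (T : V →ₗ[K] V) := by
  set S : V →ₗ[K] V := (T : V →ₗ[K] V) - 1 with hS
  have hkle : finrank K (LinearMap.ker S) ≤ d := hd ▸ Submodule.finrank_le _
  have hn1 : 1 ≤ n := by omega
  have hrn := LinearMap.finrank_range_add_finrank_ker S
  rw [hd, hT] at hrn
  have hrank : finrank K (LinearMap.range S) = n - 1 := by omega
  have hTx : ∀ x : V, (T : V →ₗ[K] V) x = x + S x := by
    intro x; simp [hS]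
  have hW : Vn ⊔ Vn.map (T : V →ₗ[K] V) = Vn ⊔ Vn.map S := by
    apply le_antisymm
    · refine sup_le le_sup_left ?_
      rintro _ ⟨x, hx, rfl⟩
      rw [hTx x]
      exact Submodule.add_mem _ (Submodule.mem_sup_left hx)
        (Submodule.mem_sup_right ⟨x, hx, rfl⟩)
    · refine sup_le le_sup_left ?_
      rintro _ ⟨x, hx, rfl⟩
      have hx' : S x = (T : V →ₗ[K] V) x - x := by simp [hS]
      rw [hx']
      exact Submodule.sub_mem _ (Submodule.mem_sup_right ⟨x, hx, rfl⟩)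
        (Submodule.mem_sup_left hx)
  have hmap_le : Vn.map S ≤ LinearMap.range S := LinearMap.map_le_range
  have hinf := Submodule.finrank_sup_add_finrank_inf_eq Vn (Vn.map S)
  rw [← hW, hsum, hVn] at hinf
  have hmaple : finrank K (Vn.map S) ≤ n - 1 := hrank ▸ Submodule.finrank_mono hmap_le
  have hmapeq : Vn.map S = LinearMap.range S := by
    apply Submodule.eq_of_le_of_finrank_le hmap_le
    omega
  have hrange_le : LinearMap.range S ≤ Vn ⊔ Vn.map (T : V →ₗ[K] V) := by
    rw [hW, ← hmapeq]
    exact le_sup_right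
  have hle : (Vn ⊔ Vn.map (T : V →ₗ[K] V)).map (T : V →ₗ[K] V)
      ≤ Vn ⊔ Vn.map (T : V →ₗ[K] V) := by
    rintro _ ⟨x, hx, rfl⟩
    rw [hTx x]
    exact Submodule.add_mem _ hx (hrange_le ⟨x, rfl⟩)
  apply Submodule.eq_of_le_of_finrank_le hle
  rw [LinearEquiv.finrank_map_eq]
end

section
/- Let V be a d-dimensional vector space over F_q, V_n a subspace of dimension n, and T ∈ GL(V) with dim Fix(T) = d - n + 1 and dim(V_n + V_n·T) = 2n - 1 < d. Then V_n + V_n·T = V_n + V_n·T⁻¹. -/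
open Module

/-- Under the hypotheses of the GoingUp step, `V_n + V_n·T = V_n + V_n·T⁻¹`. -/
theorem stmt4 {K V : Type*} [Field K] [Fintype K] [AddCommGroup V] [Module K V]
    [FiniteDimensional K V] {d n : ℕ} (hd : finrank K V = d) (hn : n ≤ d)
    (Vn : Submodule K V) (hVn : finrank K Vn = n)
    (T : V ≃ₗ[K] V)
    (hT : finrank K (LinearMap.ker ((T : V →ₗ[K] V) - 1)) = d - n + 1)
    (hsum : finrank K ↥(Vn ⊔ Vn.map (T : V →ₗ[K] V)) = 2 * n - 1)
    (hlt : 2 * n - 1 < d) :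
    Vn ⊔ Vn.map (T : V →ₗ[K] V) = Vn ⊔ Vn.map (T.symm : V →ₗ[K] V) := by
  set f : V →ₗ[K] V := (T : V →ₗ[K] V) - 1 with hf
  have hrn := LinearMap.finrank_range_add_finrank_ker f
  rw [hd] at hrn
  have hn1 : 1 ≤ n := by
    rcases Nat.eq_zero_or_pos n with h | h
    · subst h; omega
    · exact h
  have hrange : finrank K (LinearMap.range f) = n - 1 := by omega
  set W := Vn ⊔ Vn.map (T : V →ₗ[K] V) with hW
  have hVnW : Vn ≤ W := le_sup_left
  -- W ≤ Vn ⊔ Vn.map f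
  have hWle : W ≤ Vn ⊔ Vn.map f := by
    apply sup_le le_sup_left
    rintro x ⟨v, hv, rfl⟩
    have hx : (T : V →ₗ[K] V) v = v + f v := by simp [hf]
    rw [hx]
    exact add_mem (Submodule.mem_sup_left hv)
      (Submodule.mem_sup_right (Submodule.mem_map_of_mem hv))
  have hdim1 : finrank K ↥(Vn ⊔ Vn.map f) ≤ n + finrank K (Vn.map f) := by
    have := Submodule.finrank_sup_add_finrank_inf_eq Vn (Vn.map f)
    omega
  have hdim2 : finrank K W ≤ finrank K ↥(Vn ⊔ Vn.map f) :=
    Submodule.finrank_mono hWle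
  have hmaple : Vn.map f ≤ LinearMap.range f := LinearMap.map_le_range
  have hmaprange : Vn.map f = LinearMap.range f :=
    Submodule.eq_of_le_of_finrank_le hmaple (by omega)
  -- range f ≤ W
  have hrangeW : LinearMap.range f ≤ W := by
    rw [← hmaprange]
    rintro x ⟨v, hv, rfl⟩
    have hx : f v = (T : V →ₗ[K] V) v - v := by simp [hf]
    rw [hx]
    exact sub_mem (Submodule.mem_sup_right (Submodule.mem_map_of_mem hv)) (hVnW hv)
  -- W is T-invariant
  have hTW : W.map (T : V →ₗ[K] V) ≤ W := by
    rintro x ⟨w, hw, rfl⟩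
    have hx : (T : V →ₗ[K] V) w = w + f w := by simp [hf]
    rw [hx]
    exact add_mem hw (hrangeW ⟨w, rfl⟩)
  have hfr : finrank K ↥(W.map (T : V →ₗ[K] V)) = finrank K W :=
    LinearEquiv.finrank_map_eq T W
  have hWT : W.map (T : V →ₗ[K] V) = W :=
    Submodule.eq_of_le_of_finrank_le hTW (by omega)
  have hsymm : W.map (T.symm : V →ₗ[K] V) = W := by
    conv_lhs => rw [← hWT]
    rw [← Submodule.map_comp]
    simp
  calc W = W.map (T.symm : V →ₗ[K] V) := hsymm.symm
    _ = Vn.map (T.symm : V →ₗ[K] V) ⊔ (Vn.map (T : V →ₗ[K] V)).map (T.symm : V →ₗ[K] V) := by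
        rw [hW, Submodule.map_sup]
    _ = Vn.map (T.symm : V →ₗ[K] V) ⊔ Vn := by
        rw [← Submodule.map_comp]; simp
    _ = Vn ⊔ Vn.map (T.symm : V →ₗ[K] V) := sup_comm _ _
end

section
/- Let g ∈ GL(d, F_q) and suppose the characteristic polynomial of g factors as χ_g = P₁ · P₂^{c₂} ⋯ P_k^{c_k} with P₁, …, P_k irreducible, deg P₁ = m, and m ∤ deg P_i for all i ≥ 2. Let β = ⌈log_p(max{c₂,…,c_k})⌉ (with β = 0 if k = 1) and B = p^β · ∏_{i=2}^k (q^{deg P_i} - 1). Then the 1-eigenspace of g^B has dimension at least d - m. -/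
/-!
Write `χ_g = P₁ · Q` with `Q = ∏_{i ≥ 2} P_i^{c_i}`. Since `g` is invertible, no `P_i` is `X`,
so `P_i ∣ X^(q^deg P_i - 1) - 1`; raising to the `p^β`-th power (Frobenius) gives
`P_i^{c_i} ∣ X^B - 1`, hence `ker Q(g) ⊆ ker (g^B - 1)`. As `P₁` and `Q` are coprime,
`V = ker P₁(g) ⊕ ker Q(g)`. The characteristic polynomial of `g` on `ker P₁(g)` divides
`P₁ · Q`, and each of its irreducible factors divides `P₁`, so it is coprime to `Q` and
divides `P₁`. Thus `dim ker P₁(g) ≤ m` and `dim ker Q(g) ≥ d - m`.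
-/

open Module Finset Polynomial Function

section LinearAlgebra

variable {K : Type*} [Field K]

/-- The root of `r` in `AdjoinRoot r` is an eigenvalue of `A`; by spectral mapping it is a root
of `s`. -/
theorem Matrix.dvd_of_dvd_charpoly_of_aeval_eq_zero {n : Type*} [Fintype n] [DecidableEq n]
    {A : Matrix n n K} {r s : K[X]} (hr : Irreducible r) (hdvd : r ∣ A.charpoly)
    (hs : aeval A s = 0) : r ∣ s := by
  cases isEmpty_or_nonempty n
  · rw [Matrix.charpoly_isEmpty] at hdvd
    exact absurd (isUnit_of_dvd_one hdvd) hr.not_isUnit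
  have := Fact.mk hr
  set A' := A.map (algebraMap K (AdjoinRoot r))
  have hroot : AdjoinRoot.root r ∈ spectrum (AdjoinRoot r) A' := by
    rw [Matrix.mem_spectrum_iff_isRoot_charpoly, Matrix.charpoly_map, IsRoot,
      eval_map_algebraMap, AdjoinRoot.aeval_eq, AdjoinRoot.mk_eq_zero]
    exact hdvd
  have hs' : aeval A' s = 0 := by
    rw [show A' = (Algebra.ofId K (AdjoinRoot r)).mapMatrix A from rfl,
      aeval_algHom_apply, hs, map_zero]
  have : eval (AdjoinRoot.root r) (s.map (algebraMap K (AdjoinRoot r))) ∈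
      spectrum (AdjoinRoot r) (aeval A' (s.map (algebraMap K (AdjoinRoot r)))) :=
    spectrum.subset_polynomial_aeval A' _ ⟨_, hroot, rfl⟩
  rwa [aeval_map_algebraMap, hs', spectrum.zero_eq, Set.mem_singleton_iff,
    eval_map_algebraMap, AdjoinRoot.aeval_eq, AdjoinRoot.mk_eq_zero] at this

theorem Matrix.isCoprime_charpoly_X {n : Type*} [Fintype n] [DecidableEq n]
    {A : Matrix n n K} (hA : IsUnit A.det) : IsCoprime A.charpoly X := by
  refine (irreducible_X.coprime_iff_not_dvd.mpr fun h ↦ ?_).symm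
  rw [X_dvd_iff] at h
  simp [A.det_eq_sign_charpoly_coeff, h] at hA

variable {V : Type*} [AddCommGroup V] [Module K V]

namespace LinearMap

theorem dvd_of_dvd_charpoly_of_aeval_eq_zero [FiniteDimensional K V] {f : Module.End K V}
    {r s : K[X]} (hr : Irreducible r) (hdvd : r ∣ f.charpoly) (hs : aeval f s = 0) : r ∣ s := by
  let b := finBasis K V
  refine Matrix.dvd_of_dvd_charpoly_of_aeval_eq_zero (A := toMatrix b b f) hr
    (by rwa [charpoly_toMatrix]) ?_
  change aeval (toMatrixAlgEquiv b f) s = 0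
  rw [aeval_algEquiv, AlgHom.comp_apply, hs, map_zero]

theorem charpoly_restrict_dvd [FiniteDimensional K V] (f : Module.End K V)
    {W : Submodule K V} (hW : ∀ x ∈ W, f x ∈ W) : (f.restrict hW).charpoly ∣ f.charpoly := by
  obtain ⟨W', hWW'⟩ := W.exists_isCompl
  let bW := finBasis K W
  let b := (bW.prod (finBasis K W')).map (W.prodEquivOfIsCompl W' hWW')
  have hrepr (x : W) :
      (∀ i, b.repr x (.inl i) = bW.repr x i) ∧ ∀ i, b.repr x (.inr i) = 0 := by
    simp [b]
  have hb (j) : b (.inl j) = bW j := by simp [b]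
  have hM : toMatrix b b f = Matrix.fromBlocks (toMatrix bW bW (f.restrict hW))
      (toMatrix b b f).toBlocks₁₂ 0 (toMatrix b b f).toBlocks₂₂ := by
    conv_lhs => rw [← Matrix.fromBlocks_toBlocks (toMatrix b b f)]
    congr <;> ext i j
    · simp only [Matrix.toBlocks₁₁, toMatrix_apply, Matrix.of_apply, hb]
      exact (hrepr (f.restrict hW (bW j))).1 i
    · simp only [Matrix.toBlocks₂₁, toMatrix_apply, Matrix.of_apply, hb, Matrix.zero_apply]
      exact (hrepr (f.restrict hW (bW j))).2 i
  rw [← charpoly_toMatrix f b, hM, Matrix.charpoly_fromBlocks_zero₂₁, charpoly_toMatrix]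
  exact dvd_mul_right _ _

theorem aeval_restrict_apply (f : Module.End K V) {W : Submodule K V}
    (hW : ∀ x ∈ W, f x ∈ W) (s : K[X]) (x : W) :
    (aeval (f.restrict hW) s x : V) = aeval f s x := by
  simp [aeval_eq_sum_range, Module.End.pow_restrict _ hW]

theorem apply_mem_ker_aeval (f : Module.End K V) (s : K[X]) {x : V}
    (hx : x ∈ ker (aeval f s)) : f x ∈ ker (aeval f s) := by
  have hcomm := (commute_X s).map (aeval f)
  rw [aeval_X] at hcomm
  rw [mem_ker] at hx ⊢
  rw [← Module.End.mul_apply, ← hcomm.eq, Module.End.mul_apply, hx, map_zero]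

variable [FiniteDimensional K V]

theorem finrank_ker_aeval_le_natDegree (f : Module.End K V) {P Q : K[X]}
    (hPQ : IsCoprime P Q) (hf : f.charpoly = P * Q) :
    finrank K (ker (aeval f P)) ≤ P.natDegree := by
  have hW : ∀ x ∈ ker (aeval f P), f x ∈ ker (aeval f P) := fun _ ↦ apply_mem_ker_aeval f P
  set f' := f.restrict hW
  have hf' : aeval f' P = 0 := by
    ext x
    exact (aeval_restrict_apply f hW P x).trans x.2
  have hcop : IsCoprime f'.charpoly Q :=
    isCoprime_of_irreducible_dvd (fun h ↦ f'.charpoly_monic.ne_zero h.1) fun r hr hrf' hrQ ↦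
      hr.not_isUnit (hPQ.isUnit_of_dvd' (dvd_of_dvd_charpoly_of_aeval_eq_zero hr hrf' hf') hrQ)
  have hP : P ≠ 0 := left_ne_zero_of_mul (hf ▸ f.charpoly_monic.ne_zero)
  rw [← f'.charpoly_natDegree]
  exact natDegree_le_of_dvd (hcop.dvd_of_dvd_mul_right (hf ▸ charpoly_restrict_dvd f hW)) hP

theorem finrank_sub_natDegree_le_finrank_ker_aeval (f : Module.End K V) {P Q : K[X]}
    (hPQ : IsCoprime P Q) (hf : f.charpoly = P * Q) :
    finrank K V - P.natDegree ≤ finrank K (ker (aeval f Q)) := by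
  have hsup := sup_ker_aeval_eq_ker_aeval_mul_of_coprime f hPQ
  rw [← hf, aeval_self_charpoly, ker_zero] at hsup
  have hsum := Submodule.finrank_add_le_finrank_add_finrank (ker (aeval f P)) (ker (aeval f Q))
  rw [hsup, finrank_top] at hsum
  have hP := finrank_ker_aeval_le_natDegree f hPQ hf
  omega

end LinearMap

end LinearAlgebra

theorem Polynomial.pow_dvd_X_pow_sub_one {R : Type*} [CommRing R] {p : ℕ} [ExpChar R p]
    {P : R[X]} {c M N β : ℕ} (hP : P ∣ X ^ M - 1) (hc : c ≤ p ^ β) (hMN : M ∣ N) :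
    P ^ c ∣ X ^ (p ^ β * N) - 1 := by
  obtain ⟨t, rfl⟩ := hMN
  have hMN : (X : R[X]) ^ M - 1 ∣ X ^ (M * t) - 1 := by
    simpa [pow_mul] using sub_dvd_pow_sub_pow ((X : R[X]) ^ M) 1 t
  calc P ^ c ∣ (X ^ (M * t) - 1) ^ p ^ β :=
        (pow_dvd_pow P hc).trans (pow_dvd_pow_of_dvd (hP.trans hMN) _)
    _ = X ^ (p ^ β * (M * t)) - 1 := by rw [sub_pow_expChar_pow, one_pow, ← pow_mul, mul_comm]

theorem Irreducible.dvd_X_pow_card_pow_natDegree_sub_one {F : Type*} [Field F] [Finite F]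
    {P : F[X]} (hP : Irreducible P) (hX : IsCoprime P X) :
    P ∣ X ^ (Nat.card F ^ P.natDegree - 1) - 1 := by
  have h := hP.natDegree_dvd_iff_dvd_X_pow_card_pow_sub_X.mp dvd_rfl
  rw [← Nat.sub_add_cancel (Nat.one_le_pow _ _ Nat.card_pos), pow_succ', ← mul_sub_one] at h
  exact hX.dvd_of_dvd_mul_left h

theorem Polynomial.prod_pow_dvd_X_pow_sub_one {F ι : Type*} [Field F] [Fintype F] {p : ℕ}
    [Fact p.Prime] [CharP F p] {s : Finset ι} {P : ι → F[X]} (c : ι → ℕ)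
    (hirr : ∀ i ∈ s, Irreducible (P i)) (hcop : (s : Set ι).Pairwise (IsCoprime on P))
    (hX : IsCoprime (∏ i ∈ s, P i ^ c i) X) :
    ∏ i ∈ s, P i ^ c i ∣
      X ^ (p ^ Nat.clog p (s.sup c) * ∏ i ∈ s, (Fintype.card F ^ (P i).natDegree - 1)) - 1 := by
  refine prod_dvd_of_coprime (fun i hi j hj hij ↦ (hcop hi hj hij).pow) fun i hi ↦ ?_
  rcases eq_or_ne (c i) 0 with hc | hc
  · simp [hc]
  have hPX : IsCoprime (P i) X :=
    (IsCoprime.prod_left_iff.mp hX i hi).of_isCoprime_of_dvd_left (dvd_pow_self _ hc)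
  have hci : c i ≤ p ^ Nat.clog p (s.sup c) :=
    (le_sup hi).trans (Nat.le_pow_clog (Fact.out : p.Prime).one_lt _)
  refine pow_dvd_X_pow_sub_one ?_ hci (dvd_prod_of_mem _ hi)
  simpa [Nat.card_eq_fintype_card] using (hirr i hi).dvd_X_pow_card_pow_natDegree_sub_one hPX

theorem stmt16_general {F : Type*} [Field F] [Fintype F] {p : ℕ} [Fact p.Prime] [CharP F p]
    {d m k : ℕ} (g : Matrix (Fin d) (Fin d) F) (hg : IsUnit g.det)
    (P : Fin (k + 1) → Polynomial F) (c : Fin (k + 1) → ℕ)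
    (hirr : ∀ i, Irreducible (P i)) (hmon : ∀ i, (P i).Monic)
    (hdist : Function.Injective P)
    (hc0 : c 0 = 1) (hdeg : (P 0).natDegree = m)
    (hfac : g.charpoly = ∏ i, P i ^ c i) :
    d - m ≤ finrank F
      (LinearMap.ker (Matrix.toLin'
        (g ^ (p ^ Nat.clog p ((Finset.univ.erase (0 : Fin (k + 1))).sup c) *
              ∏ i ∈ Finset.univ.erase (0 : Fin (k + 1)),
                (Fintype.card F ^ (P i).natDegree - 1)) - 1))) := by
  set s := univ.erase (0 : Fin (k + 1))
  set B := p ^ Nat.clog p (s.sup c) * ∏ i ∈ s, (Fintype.card F ^ (P i).natDegree - 1)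
  set Q := ∏ i ∈ s, P i ^ c i
  have hcop : Pairwise (IsCoprime on P) := fun i j hij ↦
    (hirr i).coprime_iff_not_dvd.mpr fun h ↦ hij <| hdist <|
      eq_of_monic_of_associated (hmon i) (hmon j) ((hirr i).associated_of_dvd (hirr j) h)
  have hχ : g.charpoly = P 0 * Q := by
    rw [hfac, ← mul_prod_erase univ _ (mem_univ 0), hc0, pow_one]
  obtain ⟨R, hR⟩ : Q ∣ X ^ B - 1 :=
    prod_pow_dvd_X_pow_sub_one c (fun i _ ↦ hirr i) (hcop.set_pairwise _)
      ((Matrix.isCoprime_charpoly_X hg).of_isCoprime_of_dvd_left (hχ ▸ dvd_mul_left _ _))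
  calc d - m = finrank F (Fin d → F) - (P 0).natDegree := by simp [hdeg]
    _ ≤ finrank F (LinearMap.ker (aeval (Matrix.toLin' g) Q)) :=
      LinearMap.finrank_sub_natDegree_le_finrank_ker_aeval _
        (IsCoprime.prod_right fun i hi ↦ (hcop (ne_of_mem_erase hi).symm).pow_right)
        ((Matrix.charpoly_toLin' g).trans hχ)
    _ ≤ finrank F (LinearMap.ker (aeval (Matrix.toLin' g) (X ^ B - 1 : F[X]))) := by
      rw [hR, mul_comm]
      exact Submodule.finrank_mono (le_sup_right.trans sup_ker_aeval_le_ker_aeval_mul)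
    _ = finrank F (LinearMap.ker (Matrix.toLin' (g ^ B - 1))) := by
      rw [map_sub, map_pow, aeval_X, map_one, ← Matrix.toLin'_pow, map_sub, Matrix.toLin'_one,
        Module.End.one_eq_id]

/-- If the characteristic polynomial of `g ∈ GL(d, q)` factors as
`P₁ · P₂^{c₂} ⋯ P_k^{c_k}` with the `P_i` distinct monic irreducibles,
`deg P₁ = m`, `m ∤ deg P_i` for `i ≥ 2`, then for
`β = ⌈log_p (max {c₂, …, c_k})⌉` and `B = p^β · ∏_{i≥2} (q^{deg P_i} - 1)`,
the `1`-eigenspace of `g^B` has dimension at least `d - m`. -/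
theorem stmt16 {F : Type*} [Field F] [Fintype F] {p : ℕ} [Fact p.Prime] [CharP F p]
    {d m k : ℕ} (g : Matrix (Fin d) (Fin d) F) (hg : IsUnit g.det)
    (P : Fin (k + 1) → Polynomial F) (c : Fin (k + 1) → ℕ)
    (hirr : ∀ i, Irreducible (P i)) (hmon : ∀ i, (P i).Monic)
    (hdist : Function.Injective P)
    (hc0 : c 0 = 1) (hdeg : (P 0).natDegree = m)
    (hnd : ∀ i : Fin (k + 1), i ≠ 0 → ¬ m ∣ (P i).natDegree)
    (hfac : g.charpoly = ∏ i, P i ^ c i) :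
    d - m ≤ finrank F
      (LinearMap.ker (Matrix.toLin'
        (g ^ (p ^ Nat.clog p ((Finset.univ.erase (0 : Fin (k + 1))).sup c) *
              ∏ i ∈ Finset.univ.erase (0 : Fin (k + 1)),
                (Fintype.card F ^ (P i).natDegree - 1)) - 1))) :=
  stmt16_general g hg P c hirr hmon hdist hc0 hdeg hfac
end
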